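/- For every l > 0 and all m, n ∈ ℕ with n ≥ m, (1/(2l)) ∫_{-l}^{l} x^{2n+1} e_{2m+1,l}(x) dx = √(4m+3) · 2^{2m+1} · l^{2n+1} · (2n+1)! · (m+n+1)! / ( (n-m)! · (2(m+n+1)+1)! ), and this quantity is 0 when n < m. -/

import Mathlib

/-!
After the substitution `x = l t` the integral is `√(4m+3) l^(2n+2)` times the moment
`∫_{-1}^{1} t^(2n+1) L_{2m+1}(t) dt`. Every derivative of `(t² - 1)^N` of order `< N` vanishes at
`±1`, so `N` integrations by parts in Rodrigues' formula move all derivatives onto `t^j` and give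
`j(j-1)⋯(j-N+1) ∫_{-1}^{1} t^(j-N) (t² - 1)^N dt`, which vanishes for `j < N`. The remaining
integral `∫_{-1}^{1} t^(2s) (t² - 1)^p dt` is evaluated by induction on `p`: one more integration
by parts trades a factor `t² - 1` for `t²`.
-/

open Polynomial

/-- The `m`-th Legendre polynomial, via Rodrigues' formula. -/
noncomputable def legendre (m : ℕ) : Polynomial ℝ :=
  ((1 : ℝ) / (2 ^ m * m.factorial)) • (Polynomial.derivative^[m] ((X ^ 2 - 1) ^ m))

/-- The rescaled normalized Legendre function `e_{m,l}(x) = √(2m+1) L_m(x/l)`. -/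
noncomputable def eFun (m : ℕ) (l : ℝ) (x : ℝ) : ℝ :=
  Real.sqrt (2 * m + 1) * (legendre m).eval (x / l)

open intervalIntegral Nat

namespace Polynomial

theorem integral_eval_mul_eval_derivative (p q : ℝ[X]) (a b : ℝ) :
    ∫ x in a..b, p.eval x * q.derivative.eval x =
      p.eval b * q.eval b - p.eval a * q.eval a - ∫ x in a..b, p.derivative.eval x * q.eval x :=
  integral_mul_deriv_eq_deriv_mul (fun x _ ↦ p.hasDerivAt x) (fun x _ ↦ q.hasDerivAt x)
    (p.derivative.continuous.intervalIntegrable a b)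
    (q.derivative.continuous.intervalIntegrable a b)

theorem integral_eval_mul_eval_iterate_derivative {a b : ℝ} {q : ℝ[X]} {N : ℕ}
    (ha : ∀ k < N, (derivative^[k] q).eval a = 0) (hb : ∀ k < N, (derivative^[k] q).eval b = 0)
    (p : ℝ[X]) :
    ∫ x in a..b, p.eval x * (derivative^[N] q).eval x =
      (-1) ^ N * ∫ x in a..b, (derivative^[N] p).eval x * q.eval x := by
  induction N generalizing p with
  | zero => simp
  | succ N ih =>
    rw [Function.iterate_succ_apply', integral_eval_mul_eval_derivative,
      ha N N.lt_succ_self, hb N N.lt_succ_self,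
      ih (fun k hk ↦ ha k (hk.trans N.lt_succ_self)) (fun k hk ↦ hb k (hk.trans N.lt_succ_self)),
      Function.iterate_succ_apply]
    ring

theorem eval_iterate_derivative_X_sq_sub_one_pow {N k : ℕ} (hk : k < N) {t : ℝ} (ht : t ^ 2 = 1) :
    (derivative^[k] ((X ^ 2 - 1 : ℝ[X]) ^ N)).eval t = 0 := by
  have hfactor : (X ^ 2 - 1 : ℝ[X]) = (X - C t) * (X + C t) := by
    rw [← C_1, ← ht, C_pow]; ring
  have hne : (X ^ 2 - 1 : ℝ[X]) ^ N ≠ 0 := pow_ne_zero _ (X_pow_sub_C_ne_zero two_pos 1)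
  have hmult : N ≤ rootMultiplicity t ((X ^ 2 - 1 : ℝ[X]) ^ N) :=
    (le_rootMultiplicity_iff hne).2 (pow_dvd_pow_of_dvd (hfactor ▸ dvd_mul_right _ _) N)
  exact isRoot_iterate_derivative_of_lt_rootMultiplicity (hk.trans_le hmult)

end Polynomial

theorem integral_pow_mul_sq_sub_one_pow_succ (j p : ℕ) :
    ((j : ℝ) + 1) * ∫ x in (-1 : ℝ)..1, x ^ j * (x ^ 2 - 1) ^ (p + 1) =
      -(2 * ((p : ℝ) + 1)) * ∫ x in (-1 : ℝ)..1, x ^ (j + 2) * (x ^ 2 - 1) ^ p := by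
  have hu : ∀ x : ℝ, HasDerivAt (fun x ↦ x ^ (j + 1)) ((j + 1) * x ^ j) x := fun x ↦ by
    simpa using hasDerivAt_pow (j + 1) x
  have hv : ∀ x : ℝ, HasDerivAt (fun x ↦ (x ^ 2 - 1) ^ (p + 1))
      ((p + 1) * (x ^ 2 - 1) ^ p * (2 * x)) x := fun x ↦ by
    simpa using ((hasDerivAt_pow 2 x).sub_const 1).fun_pow (p + 1)
  have hparts := integral_deriv_mul_eq_sub (a := -1) (b := 1) (fun x _ ↦ hu x) (fun x _ ↦ hv x)
    (Continuous.intervalIntegrable (by fun_prop) _ _)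
    (Continuous.intervalIntegrable (by fun_prop) _ _)
  rw [integral_add (Continuous.intervalIntegrable (by fun_prop) (-1) 1)
    (Continuous.intervalIntegrable (by fun_prop) (-1) 1)] at hparts
  have hsecond : ∫ x in (-1 : ℝ)..1, x ^ (j + 1) * ((p + 1) * (x ^ 2 - 1) ^ p * (2 * x)) =
      2 * ((p : ℝ) + 1) * ∫ x in (-1 : ℝ)..1, x ^ (j + 2) * (x ^ 2 - 1) ^ p := by
    rw [← integral_const_mul]
    congr 1 with x
    ring
  rw [hsecond] at hparts
  simp only [mul_assoc, integral_const_mul] at hparts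
  norm_num at hparts
  linarith

theorem integral_pow_two_mul_mul_sq_sub_one_pow (p s : ℕ) :
    ∫ x in (-1 : ℝ)..1, x ^ (2 * s) * (x ^ 2 - 1) ^ p =
      (-1 : ℝ) ^ p * 2 ^ (2 * p + 1) * p ! * (s + p)! * (2 * s)! /
        ((2 * s + 2 * p + 1)! * s !) := by
  induction p generalizing s with
  | zero =>
    have hodd : (-1 : ℝ) ^ (2 * s + 1) = -1 := Odd.neg_one_pow (odd_two_mul_add_one s)
    simp only [pow_zero, mul_one, integral_pow, one_pow, hodd, add_zero, Nat.factorial_succ]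
    push_cast
    field_simp
    ring
  | succ p ih =>
    have h1 : (2 * (s : ℝ) + 1) ≠ 0 := by positivity
    have hrec : ∫ x in (-1 : ℝ)..1, x ^ (2 * s) * (x ^ 2 - 1) ^ (p + 1) =
        -(2 * ((p : ℝ) + 1)) / (2 * s + 1) *
          ∫ x in (-1 : ℝ)..1, x ^ (2 * (s + 1)) * (x ^ 2 - 1) ^ p := by
      rw [div_mul_eq_mul_div, eq_div_iff h1, mul_comm, show 2 * (s + 1) = 2 * s + 2 by ring]
      exact_mod_cast integral_pow_mul_sq_sub_one_pow_succ (2 * s) p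
    rw [hrec, ih, show s + 1 + p = s + (p + 1) by ring,
      show 2 * (s + 1) + 2 * p + 1 = 2 * s + 2 * (p + 1) + 1 by ring,
      show 2 * (s + 1) = 2 * s + 1 + 1 by ring, Nat.factorial_succ (2 * s + 1),
      Nat.factorial_succ (2 * s), Nat.factorial_succ s, Nat.factorial_succ p]
    push_cast
    field_simp
    ring

theorem integral_pow_mul_legendre (j N : ℕ) :
    ∫ x in (-1 : ℝ)..1, x ^ j * (legendre N).eval x =
      (-1) ^ N * j.descFactorial N / (2 ^ N * N !) *
        ∫ x in (-1 : ℝ)..1, x ^ (j - N) * (x ^ 2 - 1) ^ N := by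
  have hvanish {t : ℝ} (ht : t ^ 2 = 1) :
      ∀ k < N, (derivative^[k] ((X ^ 2 - 1 : ℝ[X]) ^ N)).eval t = 0 :=
    fun _ hk ↦ eval_iterate_derivative_X_sq_sub_one_pow hk ht
  have hparts := integral_eval_mul_eval_iterate_derivative
    (hvanish neg_one_sq) (hvanish (one_pow 2)) (X ^ j)
  simp only [iterate_derivative_X_pow_eq_natCast_mul, eval_mul, eval_pow, eval_X, eval_natCast,
    eval_sub, eval_one, mul_assoc, integral_const_mul] at hparts
  simp only [legendre, eval_smul, smul_eq_mul, mul_left_comm _ (1 / _ : ℝ), integral_const_mul,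
    hparts]
  ring

theorem integral_pow_mul_legendre_of_lt {j N : ℕ} (h : j < N) :
    ∫ x in (-1 : ℝ)..1, x ^ j * (legendre N).eval x = 0 := by
  simp [integral_pow_mul_legendre, Nat.descFactorial_eq_zero_iff_lt.2 h]

theorem integral_odd_pow_mul_legendre_odd {m n : ℕ} (h : m ≤ n) :
    ∫ x in (-1 : ℝ)..1, x ^ (2 * n + 1) * (legendre (2 * m + 1)).eval x =
      2 ^ (2 * m + 2) * (2 * n + 1)! * (m + n + 1)! / ((n - m)! * (2 * (m + n + 1) + 1)!) := by
  obtain ⟨k, rfl⟩ := Nat.exists_eq_add_of_le h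
  have hdesc :
      ((2 * k)! : ℝ) * (2 * (m + k) + 1).descFactorial (2 * m + 1) = (2 * (m + k) + 1)! := by
    have := Nat.factorial_mul_descFactorial (show 2 * m + 1 ≤ 2 * (m + k) + 1 by omega)
    rw [show 2 * (m + k) + 1 - (2 * m + 1) = 2 * k by omega] at this
    exact_mod_cast this
  have hodd : (-1 : ℝ) ^ (2 * m + 1) = -1 := Odd.neg_one_pow (odd_two_mul_add_one m)
  rw [integral_pow_mul_legendre, show 2 * (m + k) + 1 - (2 * m + 1) = 2 * k by omega,
    integral_pow_two_mul_mul_sq_sub_one_pow, ← hdesc, hodd, Nat.add_sub_cancel_left,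
    show k + (2 * m + 1) = m + (m + k) + 1 by omega,
    show 2 * k + 2 * (2 * m + 1) + 1 = 2 * (m + (m + k) + 1) + 1 by omega]
  field_simp
  ring

theorem integral_pow_mul_eFun {l : ℝ} (hl : l ≠ 0) (j M : ℕ) :
    ∫ x in (-l)..l, x ^ j * eFun M l x =
      √(2 * M + 1) * l ^ (j + 1) * ∫ t in (-1 : ℝ)..1, t ^ j * (legendre M).eval t := by
  have hcomp (x : ℝ) : x ^ j * eFun M l x =
      √(2 * M + 1) * l ^ j * ((x / l) ^ j * (legendre M).eval (x / l)) := by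
    rw [eFun, div_pow]
    field_simp
  simp_rw [hcomp]
  rw [integral_comp_div (fun t ↦ √(2 * M + 1) * l ^ j * (t ^ j * (legendre M).eval t)) hl,
    neg_div, div_self hl, smul_eq_mul, integral_const_mul]
  ring

theorem inner_pow_odd_eFun_odd (l : ℝ) (hl : 0 < l) (m n : ℕ) :
    (m ≤ n →
      (1 / (2 * l)) * ∫ x in (-l)..l, x ^ (2 * n + 1) * eFun (2 * m + 1) l x =
        Real.sqrt (4 * m + 3) * 2 ^ (2 * m + 1) * l ^ (2 * n + 1)
          * (((2 * n + 1).factorial : ℝ) * ((m + n + 1).factorial : ℝ))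
          / (((n - m).factorial : ℝ) * ((2 * (m + n + 1) + 1).factorial : ℝ))) ∧
    (n < m → (1 / (2 * l)) * ∫ x in (-l)..l, x ^ (2 * n + 1) * eFun (2 * m + 1) l x = 0) := by
  have hsqrt : √(2 * ((2 * m + 1 : ℕ) : ℝ) + 1) = √(4 * m + 3) := by
    push_cast
    ring_nf
  rw [integral_pow_mul_eFun hl.ne', hsqrt]
  refine ⟨fun h ↦ ?_, fun h ↦ ?_⟩
  · rw [integral_odd_pow_mul_legendre_odd h]
    field_simp
    ring
  · rw [integral_pow_mul_legendre_of_lt (by omega), mul_zero, mul_zero]
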